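/- Entropy is a strict Lyapunov function for the recombination dynamics: let t ↦ μ^t be a solution of the recombination equation such that μ^t is a probability mass function on X for each t, and let H(μ) = Σ_{x∈X} μ(x) ln μ(x) (with 0·ln 0 = 0). If at some time t₀ the measure μ^{t₀} is strictly positive on X and is not 𝒥-separated, then the derivative of t ↦ H(μ^t) at t₀ is strictly negative; and if μ^{t₀} is 𝒥-separated, this derivative is zero. -/

import Mathlib

open Finset

/-- Restriction of a word to a set of coordinates `M`. -/
def restrictW {Λ : Type*} (K : Λ → Type*) (M : Finset Λ) (x : ∀ i, K i) :
    ∀ i : M, K i := fun i => x i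

/-- Marginal of `μ` on the set of coordinates `M`. -/
def marginal {Λ : Type*} [Fintype Λ] [DecidableEq Λ] (K : Λ → Type*)
    [∀ i, Fintype (K i)] [∀ i, DecidableEq (K i)]
    (μ : (∀ i, K i) → ℝ) (M : Finset Λ) (a : ∀ i : M, K i) : ℝ :=
  ∑ x : ∀ i, K i, if restrictW K M x = a then μ x else 0

/-- One-dimensional marginal of `μ` at coordinate `i`. -/
def marg1 {Λ : Type*} [Fintype Λ] [DecidableEq Λ] (K : Λ → Type*)
    [∀ i, Fintype (K i)] [∀ i, DecidableEq (K i)]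
    (μ : (∀ i, K i) → ℝ) (i : Λ) (a : K i) : ℝ :=
  ∑ x : ∀ i, K i, if x i = a then μ x else 0

/-- `I`-recombination: the word equal to `a` on `I` and to `x` off `I`. -/
def recombW {Λ : Type*} [DecidableEq Λ] (K : Λ → Type*) (I : Finset Λ)
    (x : ∀ i, K i) (a : ∀ i : I, K i) : ∀ i, K i :=
  fun i => if h : i ∈ I then a ⟨i, h⟩ else x i

/-- Right hand side of the recombination equation. -/
def recombRHS {Λ : Type*} [Fintype Λ] [DecidableEq Λ] (K : Λ → Type*)
    [∀ i, Fintype (K i)] [∀ i, DecidableEq (K i)]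
    (𝒥 : Finset (Finset Λ))
    (φ : ∀ I : Finset Λ, (∀ i : I, K i) → (∀ i : I, K i) → ℝ)
    (μ : (∀ i, K i) → ℝ) (x : ∀ i, K i) : ℝ :=
  ∑ I ∈ 𝒥, ∑ y : ∀ i : I, K i,
    (φ I y (restrictW K I x) * marginal K μ I (restrictW K I x) * μ (recombW K I x y)
      - φ I (restrictW K I x) y * marginal K μ I y * μ x)

/-- A probability mass function on `∀ i, K i`. -/
def IsPMF {Λ : Type*} [Fintype Λ] [DecidableEq Λ] (K : Λ → Type*) [∀ i, Fintype (K i)]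
    (μ : (∀ i, K i) → ℝ) : Prop :=
  (∀ x, 0 ≤ μ x) ∧ ∑ x : ∀ i, K i, μ x = 1

/-- `𝒥`-separated measure. -/
def IsSeparated {Λ : Type*} [Fintype Λ] [DecidableEq Λ] (K : Λ → Type*)
    [∀ i, Fintype (K i)] [∀ i, DecidableEq (K i)]
    (𝒥 : Finset (Finset Λ)) (μ : (∀ i, K i) → ℝ) : Prop :=
  ∀ I ∈ 𝒥, ∀ x, μ x = marginal K μ I (restrictW K I x) * marginal K μ Iᶜ (restrictW K Iᶜ x)

/-- A `T₀`-system of frames. -/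
def IsT0 {Λ : Type*} (𝒥 : Finset (Finset Λ)) : Prop :=
  ∀ i j : Λ, i ≠ j → ∃ I ∈ 𝒥, (i ∈ I ∧ j ∉ I) ∨ (j ∈ I ∧ i ∉ I)

/-- (Minus-)Shannon entropy `H(μ) = ∑ μ(x) ln μ(x)` (note `Real.log 0 = 0`). -/
noncomputable def minusEntropy {Λ : Type*} [Fintype Λ] [DecidableEq Λ] (K : Λ → Type*)
    [∀ i, Fintype (K i)] [∀ i, DecidableEq (K i)]
    (μ : (∀ i, K i) → ℝ) : ℝ :=
  ∑ x : ∀ i, K i, μ x * Real.log (μ x)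

/-!
Pairing each recombination `x ↦ (x_{Λ∖I}, y)` with its reverse writes the entropy production
`∑ₓ μ̇(x) log μ(x)` as `∑ r log (r' / r)` over all transitions, `r` and `r'` being the rates of a
transition and of its reverse; the marginal factors drop out because `φ_I` is symmetric. Since
`log z ≤ z - 1` and reversal permutes the transitions, this is at most `∑ (r' - r) = 0`, with
equality only if every transition is balanced, which forces `𝒥`-separation. A separated measure
is stationary. At a word of mass zero the loss is at most a multiple of the mass and the gain is a
nonnegative function minimal at `t₀`, so the mass vanishes before `t₀` and is `o((t - t₀)²)`
after; as `|u log u| ≤ 2 √u`, the word contributes nothing to the derivative.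
-/

open Real Filter Topology Asymptotics

section PermSums

variable {α : Type*} [Fintype α]

lemma sum_sub_mul_eq_sum_mul_sub_of_involutive {R : Type*} [CommRing R] {σ : Equiv.Perm α}
    (hσ : Function.Involutive σ) (r f : α → R) :
    ∑ p, (r (σ p) - r p) * f p = ∑ p, r p * (f (σ p) - f p) := by
  have hswap : ∑ p, r (σ p) * f p = ∑ p, r p * f (σ p) := by
    rw [← Equiv.sum_comp σ fun p => r (σ p) * f p]
    simp only [hσ _]
  simp only [sub_mul, mul_sub, sum_sub_distrib, hswap]

lemma sum_sum_eq_zero_of_antisymm {f : α → α → ℝ} (hf : ∀ a b, f a b = -f b a) :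
    ∑ a, ∑ b, f a b = 0 := by
  have h : ∑ a, ∑ b, f a b = -∑ a, ∑ b, f a b := by
    simp only [← sum_neg_distrib]
    rw [sum_comm]
    exact sum_congr rfl fun a _ => sum_congr rfl fun b _ => hf b a
  linarith

lemma mul_log_div_le_sub {a b : ℝ} (ha : 0 < a) (hb : 0 < b) : a * log (b / a) ≤ b - a := by
  have := log_le_sub_one_of_pos (div_pos hb ha)
  calc a * log (b / a) ≤ a * (b / a - 1) := mul_le_mul_of_nonneg_left this ha.le
    _ = b - a := by field_simp

lemma mul_log_div_lt_sub {a b : ℝ} (ha : 0 < a) (hb : 0 < b) (hab : b ≠ a) :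
    a * log (b / a) < b - a := by
  have := log_lt_sub_one_of_pos (div_pos hb ha) (by rwa [ne_eq, div_eq_one_iff_eq ha.ne'])
  calc a * log (b / a) < a * (b / a - 1) := mul_lt_mul_of_pos_left this ha
    _ = b - a := by field_simp

lemma sum_mul_log_div_le_zero (σ : Equiv.Perm α) {r : α → ℝ} (hr : ∀ p, 0 < r p) :
    ∑ p, r p * log (r (σ p) / r p) ≤ 0 := by
  calc ∑ p, r p * log (r (σ p) / r p) ≤ ∑ p, (r (σ p) - r p) :=
        sum_le_sum fun p _ => mul_log_div_le_sub (hr p) (hr (σ p))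
    _ = 0 := by rw [sum_sub_distrib, Equiv.sum_comp σ r, sub_self]

lemma sum_mul_log_div_lt_zero (σ : Equiv.Perm α) {r : α → ℝ} (hr : ∀ p, 0 < r p)
    (hne : ∃ p, r (σ p) ≠ r p) : ∑ p, r p * log (r (σ p) / r p) < 0 := by
  obtain ⟨p₀, hp₀⟩ := hne
  calc ∑ p, r p * log (r (σ p) / r p) < ∑ p, (r (σ p) - r p) :=
        sum_lt_sum (fun p _ => mul_log_div_le_sub (hr p) (hr (σ p)))
          ⟨p₀, mem_univ _, mul_log_div_lt_sub (hr p₀) (hr (σ p₀)) hp₀⟩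
    _ = 0 := by rw [sum_sub_distrib, Equiv.sum_comp σ r, sub_self]

end PermSums

section Calculus

variable {f f' g l : ℝ → ℝ} {t₀ C : ℝ}

lemma abs_mul_log_le_two_mul_sqrt {u : ℝ} (h0 : 0 ≤ u) (h1 : u ≤ 1) :
    |u * log u| ≤ 2 * √u := by
  rcases h0.eq_or_lt with rfl | hpos
  · simp
  have hs : 0 < √u := sqrt_pos.mpr hpos
  have hlt := abs_log_mul_self_lt (√u) hs (sqrt_le_one.mpr h1)
  have hu : u * log u = 2 * √u * (log √u * √u) := by
    rw [log_sqrt h0]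
    nth_rewrite 1 [← mul_self_sqrt h0]
    ring
  rw [hu, abs_mul, abs_of_pos (by positivity)]
  nlinarith

/-- `exp (C t) * f t` is monotone. -/
lemma eq_zero_of_le_of_neg_mul_le_deriv (hf : ∀ t, HasDerivAt f (f' t) t) (hf0 : ∀ t, 0 ≤ f t)
    (hf' : ∀ t, -(C * f t) ≤ f' t) (ht₀ : f t₀ = 0) {t : ℝ} (ht : t ≤ t₀) : f t = 0 := by
  have hmono : Monotone fun s => exp (C * s) * f s := by
    refine monotone_of_hasDerivAt_nonneg
      (fun s => (((hasDerivAt_id s).const_mul C).exp).mul (hf s)) fun s => ?_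
    have := hf' s
    have := exp_pos (C * s)
    simp only [id_eq, mul_one, Pi.zero_apply]
    nlinarith
  have := hmono ht
  simp only [ht₀, mul_zero] at this
  exact le_antisymm (nonpos_of_mul_nonpos_right this (exp_pos _)) (hf0 t)

lemma le_add_mul_sq_of_deriv_le (hf : ∀ t, HasDerivAt f (f' t) t) {c t : ℝ} (ht : t₀ ≤ t)
    (hf' : ∀ s ∈ Set.Ioo t₀ t, f' s ≤ 2 * c * (s - t₀)) : f t ≤ f t₀ + c * (t - t₀) ^ 2 := by
  have hq : ∀ s, HasDerivAt (fun s => c * (s - t₀) ^ 2 - f s) (2 * c * (s - t₀) - f' s) s :=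
    fun s => by
      refine ((((hasDerivAt_id' s).sub_const t₀).fun_pow 2).const_mul c |>.fun_sub (hf s))
        |>.congr_deriv ?_
      simp only [Nat.cast_ofNat, Nat.add_one_sub_one, pow_one, mul_one]
      ring
  have hmono : MonotoneOn (fun s => c * (s - t₀) ^ 2 - f s) (Set.Icc t₀ t) :=
    monotoneOn_of_hasDerivWithinAt_nonneg (convex_Icc _ _)
      (fun s _ => (hq s).continuousAt.continuousWithinAt) (fun s _ => (hq s).hasDerivWithinAt)
      fun s hs => by rw [interior_Icc] at hs; linarith [hf' s hs]
  have := hmono (Set.left_mem_Icc.mpr ht) (Set.right_mem_Icc.mpr ht) ht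
  simp only [sub_self, zero_pow two_ne_zero, mul_zero, zero_sub] at this
  linarith

/-- Before `t₀`, `f' ≥ -C f` forces `f = 0`; after `t₀`, `f' ≤ g = o(t - t₀)` because `g ≥ 0` is
minimal at `t₀`. -/
lemma isLittleO_sq_of_hasDerivAt_sub (hf : ∀ t, HasDerivAt f (g t - l t) t)
    (hf0 : ∀ t, 0 ≤ f t) (ht₀ : f t₀ = 0) (hg0 : ∀ t, 0 ≤ g t) (hg : DifferentiableAt ℝ g t₀)
    (hl0 : ∀ t, 0 ≤ l t) (hlC : ∀ t, l t ≤ C * f t) :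
    f =o[𝓝 t₀] fun t => (t - t₀) ^ 2 := by
  have hfmin : IsLocalMin f t₀ := Eventually.of_forall fun t => ht₀ ▸ hf0 t
  have hgt₀ : g t₀ = 0 := by
    have hderiv := hfmin.hasDerivAt_eq_zero (hf t₀)
    have hlt₀ : l t₀ ≤ 0 := by simpa [ht₀] using hlC t₀
    linarith [hg0 t₀, hl0 t₀]
  have hgmin : IsLocalMin g t₀ := Eventually.of_forall fun t => hgt₀ ▸ hg0 t
  have hg' : HasDerivAt g 0 t₀ := hgmin.hasDerivAt_eq_zero hg.hasDerivAt ▸ hg.hasDerivAt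
  have hgo : g =o[𝓝 t₀] fun t => t - t₀ := by
    simpa [hgt₀] using hg'.isLittleO
  refine isLittleO_iff.mpr fun c hc => ?_
  obtain ⟨δ, hδ, hball⟩ :=
    Metric.eventually_nhds_iff_ball.mp (isLittleO_iff.mp hgo (by positivity : 0 < 2 * c))
  filter_upwards [Metric.ball_mem_nhds t₀ hδ] with t ht
  rcases le_or_gt t t₀ with hle | hlt
  · have hft : f t = 0 :=
      eq_zero_of_le_of_neg_mul_le_deriv (C := C) hf hf0 (fun s => by linarith [hg0 s, hlC s])
        ht₀ hle
    rw [hft, norm_zero]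
    positivity
  · have hft : f t ≤ f t₀ + c * (t - t₀) ^ 2 := by
      refine le_add_mul_sq_of_deriv_le hf hlt.le fun s hs => ?_
      have hsball : s ∈ Metric.ball t₀ δ := by
        rw [Metric.mem_ball, Real.dist_eq, abs_of_pos (by linarith [hs.1])] at ht ⊢
        linarith [hs.2]
      have := hball s hsball
      rw [Real.norm_of_nonneg (hg0 s), Real.norm_of_nonneg (by linarith [hs.1])] at this
      linarith [hl0 s]
    rw [Real.norm_of_nonneg (hf0 t), Real.norm_of_nonneg (by positivity)]
    linarith

lemma hasDerivAt_mul_log_zero_of_isLittleO_sq (hf0 : ∀ t, 0 ≤ f t) (hf1 : ∀ t, f t ≤ 1)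
    (hf : f =o[𝓝 t₀] fun t => (t - t₀) ^ 2) :
    HasDerivAt (fun t => f t * log (f t)) 0 t₀ := by
  have ht₀ : f t₀ = 0 := by simpa using (hf.bound one_pos).self_of_nhds
  rw [hasDerivAt_iff_isLittleO]
  simp only [ht₀, log_zero, mul_zero, sub_zero, smul_zero]
  refine isLittleO_iff.mpr fun c hc => ?_
  filter_upwards [hf.bound (by positivity : 0 < (c / 2) ^ 2)] with t ht
  rw [Real.norm_of_nonneg (hf0 t), norm_pow, Real.norm_eq_abs, sq_abs] at ht
  have hsqrt : √(f t) ≤ c / 2 * |t - t₀| := by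
    rw [← sqrt_sq (by positivity : 0 ≤ c / 2 * |t - t₀|), mul_pow, sq_abs]
    exact sqrt_le_sqrt ht
  calc ‖f t * log (f t)‖ ≤ 2 * √(f t) := abs_mul_log_le_two_mul_sqrt (hf0 t) (hf1 t)
    _ ≤ c * ‖t - t₀‖ := by rw [Real.norm_eq_abs]; linarith

end Calculus

section Words
variable {Λ : Type*} [DecidableEq Λ] {K : Λ → Type*} (I : Finset Λ)

@[simp]
lemma restrictW_recombW (x : ∀ i, K i) (a : ∀ i : I, K i) :
    restrictW K I (recombW K I x a) = a := by
  funext i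
  simp [restrictW, recombW, i.2]

@[simp]
lemma recombW_recombW_restrictW (x : ∀ i, K i) (a : ∀ i : I, K i) :
    recombW K I (recombW K I x a) (restrictW K I x) = x := by
  funext i
  by_cases h : i ∈ I <;> simp [recombW, restrictW, h]

lemma restrictW_compl_recombW [Fintype Λ] (x : ∀ i, K i) (a : ∀ i : I, K i) :
    restrictW K Iᶜ (recombW K I x a) = restrictW K Iᶜ x := by
  funext i
  simp [restrictW, recombW, Finset.mem_compl.mp i.2]

lemma recombW_restrictW_of_restrictW_compl_eq [Fintype Λ] {x z : ∀ i, K i}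
    (h : restrictW K Iᶜ z = restrictW K Iᶜ x) : recombW K I x (restrictW K I z) = z := by
  funext i
  by_cases hi : i ∈ I
  · simp [recombW, restrictW, hi]
  · simpa [recombW, hi, restrictW] using (congrFun h ⟨i, Finset.mem_compl.mpr hi⟩).symm

/-- Pairs the recombination `x ↦ (x_{Λ∖I}, y)` with its reverse `(x_{Λ∖I}, y) ↦ x`. -/
def recombSwap : Equiv.Perm ((∀ i, K i) × (∀ i : I, K i)) :=
  Function.Involutive.toPerm (fun p => (recombW K I p.1 p.2, restrictW K I p.1)) fun p => by simp

@[simp]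
lemma recombSwap_apply (p : (∀ i, K i) × (∀ i : I, K i)) :
    recombSwap I p = (recombW K I p.1 p.2, restrictW K I p.1) := rfl

lemma recombSwap_involutive : Function.Involutive (recombSwap (K := K) I) := fun p => by simp

end Words

section Marginals
variable {Λ : Type*} [Fintype Λ] [DecidableEq Λ] {K : Λ → Type*}
  [∀ i, Fintype (K i)] [∀ i, DecidableEq (K i)] (ν : (∀ i, K i) → ℝ) (I : Finset Λ)

lemma sum_mul_marginal (f : (∀ i : I, K i) → ℝ) :
    ∑ x, f (restrictW K I x) * ν x = ∑ a, f a * marginal K ν I a := by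
  simp only [marginal, mul_sum, mul_ite, mul_zero]
  rw [sum_comm]
  simp [eq_comm]

lemma sum_marginal : ∑ a, marginal K ν I a = ∑ x, ν x := by
  simpa using (sum_mul_marginal ν I fun _ => 1).symm

lemma sum_apply_recombW (x : ∀ i, K i) :
    ∑ a, ν (recombW K I x a) = marginal K ν Iᶜ (restrictW K Iᶜ x) := by
  rw [marginal, ← sum_filter]
  have hinv : ∀ z ∈ univ.filter (restrictW K Iᶜ · = restrictW K Iᶜ x),
      recombW K I x (restrictW K I z) = z :=
    fun z hz => recombW_restrictW_of_restrictW_compl_eq I (mem_filter.mp hz).2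
  refine (sum_nbij' (restrictW K I) (recombW K I x) (by simp)
    (by simp [restrictW_compl_recombW]) hinv (by simp) fun z hz => by rw [hinv z hz]).symm

variable {ν}

lemma marginal_nonneg (hν : ∀ x, 0 ≤ ν x) (a : ∀ i : I, K i) : 0 ≤ marginal K ν I a :=
  sum_nonneg fun x _ => by split_ifs <;> simp [hν x]

lemma marginal_le_sum (hν : ∀ x, 0 ≤ ν x) (a : ∀ i : I, K i) :
    marginal K ν I a ≤ ∑ x, ν x :=
  sum_le_sum fun x _ => by split_ifs <;> simp [hν x]

lemma marginal_pos (hν : ∀ x, 0 < ν x) (x : ∀ i, K i) (a : ∀ i : I, K i) :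
    0 < marginal K ν I a := by
  refine lt_of_lt_of_le (hν (recombW K I x a)) ?_
  have := single_le_sum (f := fun z => if restrictW K I z = a then ν z else 0)
    (fun z _ => by split_ifs <;> simp [(hν z).le]) (mem_univ (recombW K I x a))
  simpa [marginal] using this

lemma differentiableAt_marginal {μ : ℝ → (∀ i, K i) → ℝ} {t : ℝ}
    (hμ : ∀ x, DifferentiableAt ℝ (fun s => μ s x) t) (a : ∀ i : I, K i) :
    DifferentiableAt ℝ (fun s => marginal K (μ s) I a) t := by
  simp only [marginal, ← sum_filter]
  fun_prop

end Marginals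

section RecombRate
variable {Λ : Type*} [Fintype Λ] [DecidableEq Λ] {K : Λ → Type*}
  [∀ i, Fintype (K i)] [∀ i, DecidableEq (K i)]
  (φ : ∀ I : Finset Λ, (∀ i : I, K i) → (∀ i : I, K i) → ℝ) (ν : (∀ i, K i) → ℝ)

/-- The rate at which the word `p.1` is recombined into `(p.1_{Λ∖I}, p.2)`. -/
def recombRate (I : Finset Λ) (p : (∀ i, K i) × (∀ i : I, K i)) : ℝ :=
  φ I (restrictW K I p.1) p.2 * marginal K ν I p.2 * ν p.1

lemma recombRHS_eq_sum_sub (𝒥 : Finset (Finset Λ)) (x : ∀ i, K i) :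
    recombRHS K 𝒥 φ ν x = ∑ I ∈ 𝒥, ∑ y,
      (recombRate φ ν I (recombSwap I (x, y)) - recombRate φ ν I (x, y)) := by
  simp [recombRHS, recombRate]

lemma sum_recombRHS_mul (𝒥 : Finset (Finset Λ)) (f : (∀ i, K i) → ℝ) :
    ∑ x, recombRHS K 𝒥 φ ν x * f x =
      ∑ I ∈ 𝒥, ∑ p, recombRate φ ν I p * (f (recombSwap I p).1 - f p.1) := by
  simp_rw [recombRHS_eq_sum_sub, sum_mul]
  rw [sum_comm]
  refine sum_congr rfl fun I _ => ?_
  rw [← sum_sub_mul_eq_sum_mul_sub_of_involutive (recombSwap_involutive I) _ (f ·.1),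
    ← Fintype.sum_prod_type']

lemma sum_recombRHS (𝒥 : Finset (Finset Λ)) : ∑ x, recombRHS K 𝒥 φ ν x = 0 := by
  simpa using sum_recombRHS_mul φ ν 𝒥 fun _ => 1

variable {φ ν} {I : Finset Λ}

lemma recombRate_nonneg (hφ : ∀ a b, 0 ≤ φ I a b) (hν : ∀ x, 0 ≤ ν x)
    (p : (∀ i, K i) × (∀ i : I, K i)) : 0 ≤ recombRate φ ν I p :=
  mul_nonneg (mul_nonneg (hφ _ _) (marginal_nonneg I hν _)) (hν _)

lemma recombRate_pos (hφ : ∀ a b, 0 < φ I a b) (hν : ∀ x, 0 < ν x)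
    (p : (∀ i, K i) × (∀ i : I, K i)) : 0 < recombRate φ ν I p :=
  mul_pos (mul_pos (hφ _ _) (marginal_pos I hν p.1 _)) (hν _)

lemma recombRate_le (hφ : ∀ a b, 0 ≤ φ I a b) (hν : ∀ x, 0 ≤ ν x) (hsum : ∑ x, ν x = 1)
    (p : (∀ i, K i) × (∀ i : I, K i)) :
    recombRate φ ν I p ≤ φ I (restrictW K I p.1) p.2 * ν p.1 := by
  have hm := marginal_le_sum I hν p.2
  rw [hsum] at hm
  exact mul_le_mul_of_nonneg_right (mul_le_of_le_one_right (hφ _ _) hm) (hν _)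

lemma differentiableAt_recombRate {μ : ℝ → (∀ i, K i) → ℝ} {t : ℝ}
    (hμ : ∀ x, DifferentiableAt ℝ (fun s => μ s x) t) (p : (∀ i, K i) × (∀ i : I, K i)) :
    DifferentiableAt ℝ (fun s => recombRate φ (μ s) I p) t :=
  ((differentiableAt_marginal I hμ p.2).const_mul _).mul (hμ p.1)

lemma sum_recombRate_mul_sub_eq_zero (hφ : ∀ a b, φ I a b = φ I b a)
    (G : (∀ i : I, K i) → ℝ) :
    ∑ p, recombRate φ ν I p * (G p.2 - G (restrictW K I p.1)) = 0 := by
  set m := marginal K ν I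
  calc ∑ p, recombRate φ ν I p * (G p.2 - G (restrictW K I p.1))
      = ∑ x, (∑ b, φ I (restrictW K I x) b * m b * (G b - G (restrictW K I x))) * ν x := by
        rw [Fintype.sum_prod_type]
        simp only [recombRate, sum_mul]
        exact sum_congr rfl fun x _ => sum_congr rfl fun b _ => by ring
    _ = ∑ a, (∑ b, φ I a b * m b * (G b - G a)) * m a :=
        sum_mul_marginal ν I fun a => ∑ b, φ I a b * m b * (G b - G a)
    _ = ∑ a, ∑ b, φ I a b * m a * m b * (G b - G a) := by
        simp only [sum_mul]
        exact sum_congr rfl fun a _ => sum_congr rfl fun b _ => by ring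
    _ = 0 := sum_sum_eq_zero_of_antisymm fun a b => by rw [hφ a b]; ring

lemma log_recombRate_swap_div (hφ : ∀ a b, 0 < φ I a b) (hφs : ∀ a b, φ I a b = φ I b a)
    (hν : ∀ x, 0 < ν x) (p : (∀ i, K i) × (∀ i : I, K i)) :
    log (recombRate φ ν I (recombSwap I p) / recombRate φ ν I p) =
      log (ν (recombSwap I p).1) - log (ν p.1) -
        (log (marginal K ν I p.2) - log (marginal K ν I (restrictW K I p.1))) := by
  obtain ⟨x, y⟩ := p
  have hmx := (marginal_pos I hν x (restrictW K I x)).ne'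
  have hmy := (marginal_pos I hν x y).ne'
  have hφ' := (hφ (restrictW K I x) y).ne'
  have hx := (hν x).ne'
  have hx' := (hν (recombW K I x y)).ne'
  simp only [recombSwap_apply, recombRate, restrictW_recombW]
  rw [hφs y, log_div (by simp [hφ', hmx, hx']) (by simp [hφ', hmy, hx]),
    log_mul (by simp [hφ', hmx]) hx', log_mul (by simp [hφ', hmy]) hx, log_mul hφ' hmx,
    log_mul hφ' hmy]
  ring

variable (φ) in
lemma sum_recombRHS_mul_log_eq {𝒥 : Finset (Finset Λ)} (hφ : ∀ I ∈ 𝒥, ∀ a b, 0 < φ I a b)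
    (hφs : ∀ I ∈ 𝒥, ∀ a b, φ I a b = φ I b a) (hν : ∀ x, 0 < ν x) :
    ∑ x, recombRHS K 𝒥 φ ν x * log (ν x) = ∑ I ∈ 𝒥, ∑ p,
      recombRate φ ν I p * log (recombRate φ ν I (recombSwap I p) / recombRate φ ν I p) := by
  rw [sum_recombRHS_mul]
  refine sum_congr rfl fun I hI => ?_
  have hcancel := sum_recombRate_mul_sub_eq_zero (ν := ν) (hφs I hI) (log <| marginal K ν I ·)
  symm
  rw [sum_congr rfl fun p _ => by rw [log_recombRate_swap_div (hφ I hI) (hφs I hI) hν, mul_sub],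
    sum_sub_distrib, hcancel, sub_zero]

lemma recombRate_swap_eq_of_isSeparated {𝒥 : Finset (Finset Λ)} (hφs : ∀ a b, φ I a b = φ I b a)
    (hsep : IsSeparated K 𝒥 ν) (hI : I ∈ 𝒥) (p : (∀ i, K i) × (∀ i : I, K i)) :
    recombRate φ ν I (recombSwap I p) = recombRate φ ν I p := by
  obtain ⟨x, y⟩ := p
  simp only [recombSwap_apply, recombRate, restrictW_recombW]
  rw [hsep I hI (recombW K I x y), hsep I hI x, restrictW_recombW, restrictW_compl_recombW, hφs]
  ring

lemma recombRHS_eq_zero_of_isSeparated {𝒥 : Finset (Finset Λ)}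
    (hφs : ∀ I ∈ 𝒥, ∀ a b, φ I a b = φ I b a) (hsep : IsSeparated K 𝒥 ν) (x : ∀ i, K i) :
    recombRHS K 𝒥 φ ν x = 0 := by
  rw [recombRHS_eq_sum_sub]
  exact sum_eq_zero fun I hI => sum_eq_zero fun y _ =>
    sub_eq_zero.mpr (recombRate_swap_eq_of_isSeparated (hφs I hI) hsep hI _)

/-- If every transition out of `x` were balanced by its reverse, summing the balance equations
over `y` would factor `ν x` into its marginals. -/
lemma exists_recombRate_swap_ne (hφ : ∀ a b, φ I a b ≠ 0) (hφs : ∀ a b, φ I a b = φ I b a)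
    (hsum : ∑ x, ν x = 1) {x : ∀ i, K i}
    (hx : ν x ≠ marginal K ν I (restrictW K I x) * marginal K ν Iᶜ (restrictW K Iᶜ x)) :
    ∃ p, recombRate φ ν I (recombSwap I p) ≠ recombRate φ ν I p := by
  by_contra! hbal
  have hy : ∀ y, ν (recombW K I x y) * marginal K ν I (restrictW K I x) =
      ν x * marginal K ν I y := fun y => by
    have := hbal (x, y)
    simp only [recombSwap_apply, recombRate, restrictW_recombW, hφs y] at this
    exact mul_left_cancel₀ (hφ (restrictW K I x) y) (by linarith)
  apply hx
  rw [← sum_apply_recombW, mul_comm, sum_mul, sum_congr rfl fun y _ => hy y, ← mul_sum,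
    sum_marginal, hsum, mul_one]

variable (φ) in
lemma sum_recombRHS_mul_log_neg {𝒥 : Finset (Finset Λ)} (hφ : ∀ I ∈ 𝒥, ∀ a b, 0 < φ I a b)
    (hφs : ∀ I ∈ 𝒥, ∀ a b, φ I a b = φ I b a) (hν : ∀ x, 0 < ν x) (hsum : ∑ x, ν x = 1)
    (hsep : ¬ IsSeparated K 𝒥 ν) :
    ∑ x, recombRHS K 𝒥 φ ν x * log (ν x) < 0 := by
  obtain ⟨I₀, hI₀, x₀, hx₀⟩ : ∃ I ∈ 𝒥, ∃ x, ν x ≠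
      marginal K ν I (restrictW K I x) * marginal K ν Iᶜ (restrictW K Iᶜ x) := by
    simpa [IsSeparated] using hsep
  rw [sum_recombRHS_mul_log_eq φ hφ hφs hν]
  calc _ < ∑ I ∈ 𝒥, (0 : ℝ) :=
        sum_lt_sum (fun I hI => sum_mul_log_div_le_zero _ (recombRate_pos (hφ I hI) hν))
          ⟨I₀, hI₀, sum_mul_log_div_lt_zero _ (recombRate_pos (hφ I₀ hI₀) hν)
            (exists_recombRate_swap_ne (fun a b => (hφ I₀ hI₀ a b).ne') (hφs I₀ hI₀) hsum hx₀)⟩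
    _ = 0 := sum_const_zero

end RecombRate

section Solutions
variable {Λ : Type*} [Fintype Λ] [DecidableEq Λ] {K : Λ → Type*}
  [∀ i, Fintype (K i)] [∀ i, DecidableEq (K i)]
  {𝒥 : Finset (Finset Λ)} {φ : ∀ I : Finset Λ, (∀ i : I, K i) → (∀ i : I, K i) → ℝ}
  {μ : ℝ → (∀ i, K i) → ℝ}

lemma hasDerivAt_mul_log_of_eq_zero (hφ : ∀ I ∈ 𝒥, ∀ a b, 0 < φ I a b)
    (hsol : ∀ x t, HasDerivAt (fun s => μ s x) (recombRHS K 𝒥 φ (μ t) x) t)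
    (hpmf : ∀ t, IsPMF K (μ t)) {t₀ : ℝ} {x : ∀ i, K i} (hx : μ t₀ x = 0) :
    HasDerivAt (fun t => μ t x * log (μ t x)) 0 t₀ := by
  have hμ0 : ∀ t x, 0 ≤ μ t x := fun t => (hpmf t).1
  have hμ1 : ∀ t, μ t x ≤ 1 := fun t =>
    (hpmf t).2 ▸ single_le_sum (fun z _ => hμ0 t z) (mem_univ x)
  refine hasDerivAt_mul_log_zero_of_isLittleO_sq (hμ0 · x) hμ1 <|
    isLittleO_sq_of_hasDerivAt_sub
      (g := fun t => ∑ I ∈ 𝒥, ∑ y, recombRate φ (μ t) I (recombSwap I (x, y)))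
      (l := fun t => ∑ I ∈ 𝒥, ∑ y, recombRate φ (μ t) I (x, y))
      (C := ∑ I ∈ 𝒥, ∑ y, φ I (restrictW K I x) y)
      (fun t => ?_) (hμ0 · x) hx (fun t => ?_) ?_ (fun t => ?_) (fun t => ?_)
  · simpa only [recombRHS_eq_sum_sub, sum_sub_distrib] using hsol x t
  · exact sum_nonneg fun I hI => sum_nonneg fun y _ =>
      recombRate_nonneg (fun a b => (hφ I hI a b).le) (hμ0 t) _
  · exact DifferentiableAt.fun_sum fun I _ => DifferentiableAt.fun_sum fun y _ =>
      differentiableAt_recombRate (fun z => (hsol z t₀).differentiableAt) _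
  · exact sum_nonneg fun I hI => sum_nonneg fun y _ =>
      recombRate_nonneg (fun a b => (hφ I hI a b).le) (hμ0 t) _
  · simp only [sum_mul]
    exact sum_le_sum fun I hI => sum_le_sum fun y _ =>
      recombRate_le (fun a b => (hφ I hI a b).le) (hμ0 t) (hpmf t).2 (x, y)

end Solutions

theorem entropy_lyapunov_general {Λ : Type*} [Fintype Λ] [DecidableEq Λ]
    (K : Λ → Type*) [∀ i, Fintype (K i)] [∀ i, DecidableEq (K i)]
    (𝒥 : Finset (Finset Λ))
    (φ : ∀ I : Finset Λ, (∀ i : I, K i) → (∀ i : I, K i) → ℝ)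
    (hφpos : ∀ I ∈ 𝒥, ∀ a b, 0 < φ I a b)
    (hφsymm : ∀ I ∈ 𝒥, ∀ a b, φ I a b = φ I b a)
    (μ : ℝ → (∀ i, K i) → ℝ)
    (hsol : ∀ x t, HasDerivAt (fun s => μ s x) (recombRHS K 𝒥 φ (μ t) x) t)
    (hpmf : ∀ t, IsPMF K (μ t))
    (t₀ : ℝ) :
    ((∀ x, 0 < μ t₀ x) → ¬ IsSeparated K 𝒥 (μ t₀) →
      ∃ d : ℝ, d < 0 ∧ HasDerivAt (fun t => minusEntropy K (μ t)) d t₀) ∧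
    (IsSeparated K 𝒥 (μ t₀) →
      HasDerivAt (fun t => minusEntropy K (μ t)) 0 t₀) := by
  have hterm : ∀ x, 0 < μ t₀ x → HasDerivAt (fun t => μ t x * log (μ t x))
      (recombRHS K 𝒥 φ (μ t₀) x * (log (μ t₀ x) + 1)) t₀ := fun x hx => by
    have := (Real.hasDerivAt_mul_log hx.ne').comp t₀ (hsol x t₀)
    exact this.congr_deriv (mul_comm _ _)
  refine ⟨fun hpos hnsep =>
    ⟨_, sum_recombRHS_mul_log_neg φ hφpos hφsymm hpos (hpmf t₀).2 hnsep, ?_⟩, fun hsep => ?_⟩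
  · have := HasDerivAt.fun_sum fun x (_ : x ∈ univ) => hterm x (hpos x)
    simpa only [minusEntropy, mul_add, mul_one, sum_add_distrib, sum_recombRHS, add_zero]
      using this
  · have hzero : ∀ x, HasDerivAt (fun t => μ t x * log (μ t x)) 0 t₀ := fun x => by
      rcases ((hpmf t₀).1 x).eq_or_lt with hx | hx
      · exact hasDerivAt_mul_log_of_eq_zero hφpos hsol hpmf hx.symm
      · simpa [recombRHS_eq_zero_of_isSeparated hφsymm hsep x] using hterm x hx
    simpa [minusEntropy] using HasDerivAt.fun_sum fun x (_ : x ∈ univ) => hzero x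

/-- entropy is a strict Lyapunov function for the recombination dynamics: along
a solution consisting of probability mass functions, if at time `t₀` the measure is strictly
positive and not `𝒥`-separated then `t ↦ H(μ^t)` has strictly negative derivative at `t₀`,
and if it is `𝒥`-separated then this derivative is zero. -/
theorem entropy_lyapunov {Λ : Type*} [Fintype Λ] [DecidableEq Λ] [Nonempty Λ]
    (K : Λ → Type*) [∀ i, Fintype (K i)] [∀ i, DecidableEq (K i)] [∀ i, Nonempty (K i)]
    (𝒥 : Finset (Finset Λ))
    (φ : ∀ I : Finset Λ, (∀ i : I, K i) → (∀ i : I, K i) → ℝ)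
    (hφpos : ∀ I ∈ 𝒥, ∀ a b, 0 < φ I a b)
    (hφsymm : ∀ I ∈ 𝒥, ∀ a b, φ I a b = φ I b a)
    (μ : ℝ → (∀ i, K i) → ℝ)
    (hsol : ∀ x t, HasDerivAt (fun s => μ s x) (recombRHS K 𝒥 φ (μ t) x) t)
    (hpmf : ∀ t, IsPMF K (μ t))
    (t₀ : ℝ) :
    ((∀ x, 0 < μ t₀ x) → ¬ IsSeparated K 𝒥 (μ t₀) →
      ∃ d : ℝ, d < 0 ∧ HasDerivAt (fun t => minusEntropy K (μ t)) d t₀) ∧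
    (IsSeparated K 𝒥 (μ t₀) →
      HasDerivAt (fun t => minusEntropy K (μ t)) 0 t₀) :=
  entropy_lyapunov_general K 𝒥 φ hφpos hφsymm μ hsol hpmf t₀
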